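/- Any quantum circuit with coupling graph L(G), containing λ two-qubit gates, can be routed to hardware with coupling graph heavy(G) with a SWAP overhead of at most 2λ. Formally: if for every edge {i,j} of L(G) there is a vertex m of heavy(G) adjacent to both i and j, then replacing each two-qubit gate U_{ij} by SWAP_{mi} · U_{mj} · SWAP_{im} yields a sequence of gates each acting along an edge of heavy(G), with exactly 2λ SWAP gates inserted, computing the same unitary on the heavy-node qubits. -/

import Mathlib

/-!
Conjugating a gate on qubits `(m, j)` by the SWAP of qubits `i` and `m` only relabels qubit
`m` as `i`, so `SWAP_{im} · U_{mj} · SWAP_{im} = U_{ij}` whenever `i, m, j` are distinct.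
Replacing every gate `U_{ij}` of the circuit by these three gates along the hardware edges
`{i,m}` and `{m,j}` therefore computes the same unitary, at the cost of two SWAPs per gate.
-/

open SimpleGraph

/-- The SWAP gate on two qubits, as a matrix in the computational basis. -/
def swapMat : Matrix (Fin 2 × Fin 2) (Fin 2 × Fin 2) ℂ :=
  fun p q => if p.1 = q.2 ∧ p.2 = q.1 then 1 else 0

/-- A two-qubit gate `U` applied to qubits `a` and `b` of a register of qubits indexed
by `β`, acting as the identity on all other qubits. -/
def gateOn {β : Type*} [DecidableEq β] [Fintype β]
    (U : Matrix (Fin 2 × Fin 2) (Fin 2 × Fin 2) ℂ) (a b : β) :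
    Matrix (β → Fin 2) (β → Fin 2) ℂ :=
  fun x y => (if ∀ c, c ≠ a → c ≠ b → x c = y c then 1 else 0) * U (x a, x b) (y a, y b)

section

variable {β : Type*} [DecidableEq β] [Fintype β]

theorem gateOn_submatrix_comp (U : Matrix (Fin 2 × Fin 2) (Fin 2 × Fin 2) ℂ)
    (σ : Equiv.Perm β) (a b : β) :
    (gateOn U a b).submatrix (· ∘ σ) (· ∘ σ) = gateOn U (σ a) (σ b) := by
  ext x y
  simp only [gateOn, Matrix.submatrix_apply, Function.comp_apply]
  congr 2
  refine propext ⟨fun h c hca hcb => ?_, fun h c hca hcb => h _ ?_ ?_⟩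
  · simpa using h (σ.symm c) (by simpa [Equiv.symm_apply_eq] using hca)
      (by simpa [Equiv.symm_apply_eq] using hcb)
  · simpa using hca
  · simpa using hcb

theorem gateOn_swapMat {a b : β} (hab : a ≠ b) :
    gateOn swapMat a b =
      Equiv.Perm.permMatrix ℂ (Equiv.arrowCongr (Equiv.swap a b) (Equiv.refl (Fin 2))) := by
  ext x y
  simp only [gateOn, swapMat, PEquiv.toMatrix_apply, Equiv.toPEquiv_apply, Option.mem_def,
    Option.some.injEq, ← ite_and, mul_ite, mul_one, mul_zero]
  congr 1
  simp only [Equiv.arrowCongr_apply, Equiv.symm_swap, Equiv.coe_refl, funext_iff,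
    Function.comp_apply]
  refine propext ⟨fun ⟨⟨hxa, hxb⟩, hrest⟩ c => ?_, fun h => ⟨⟨?_, ?_⟩, fun c hca hcb => ?_⟩⟩
  · rcases eq_or_ne c a with rfl | hca
    · simpa using hxb
    rcases eq_or_ne c b with rfl | hcb
    · simpa using hxa
    · simpa [Equiv.swap_apply_of_ne_of_ne hca hcb] using hrest c hca hcb
  · simpa using h b
  · simpa using h a
  · simpa [Equiv.swap_apply_of_ne_of_ne hca hcb] using h c

theorem gateOn_swapMat_conj (U : Matrix (Fin 2 × Fin 2) (Fin 2 × Fin 2) ℂ) {i m j : β}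
    (him : i ≠ m) (hmj : m ≠ j) (hij : i ≠ j) :
    gateOn swapMat i m * gateOn U m j * gateOn swapMat i m = gateOn U i j := by
  rw [gateOn_swapMat him, PEquiv.toMatrix_toPEquiv_mul, PEquiv.mul_toMatrix_toPEquiv,
    Matrix.submatrix_submatrix]
  have hm : Equiv.swap i m m = i := Equiv.swap_apply_right i m
  have hj : Equiv.swap i m j = j := Equiv.swap_apply_of_ne_of_ne hij.symm hmj.symm
  calc _ = (gateOn U m j).submatrix (· ∘ Equiv.swap i m) (· ∘ Equiv.swap i m) := rfl
    _ = gateOn U i j := by rw [gateOn_submatrix_comp, hm, hj]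

end

/-- line-graph routing. Let the qubits be indexed by the vertices `β`
of the hardware coupling graph `H` (playing the role of `heavy(G)`), and let `LG`
(playing the role of `L(G)`) be the coupling graph of the circuit, a graph on the heavy
nodes. Suppose every edge `{i,j}` of `LG` has a mediating vertex `m` adjacent in `H` to
both `i` and `j`. Then any circuit `C` — a list of two-qubit gates, each acting along an
edge of `LG`, with `λ = C.length` two-qubit gates — can be routed: there is a circuit
`R` (gates tagged by a Boolean marking the inserted SWAPs) such that every gate of `R`
acts along an edge of `H`, every tagged gate is a SWAP gate, exactly `2λ` SWAP gates are
inserted, and `R` computes the same unitary on the full register as `C`. -/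
theorem line_graph_routing {β : Type*} [DecidableEq β] [Fintype β]
    (H LG : SimpleGraph β)
    (hmed : ∀ i j : β, LG.Adj i j → ∃ m : β, H.Adj i m ∧ H.Adj m j)
    (C : List (Matrix (Fin 2 × Fin 2) (Fin 2 × Fin 2) ℂ × β × β))
    (hC : ∀ g ∈ C, LG.Adj g.2.1 g.2.2) :
    ∃ R : List (Bool × Matrix (Fin 2 × Fin 2) (Fin 2 × Fin 2) ℂ × β × β),
      (∀ g ∈ R, H.Adj g.2.2.1 g.2.2.2) ∧
      (∀ g ∈ R, g.1 = true → g.2.1 = swapMat) ∧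
      R.countP (fun g => g.1) = 2 * C.length ∧
      (R.map (fun g => gateOn g.2.1 g.2.2.1 g.2.2.2)).prod =
        (C.map (fun g => gateOn g.1 g.2.1 g.2.2)).prod := by
  induction C with
  | nil => exact ⟨[], by simp⟩
  | cons g C ih =>
    obtain ⟨U, i, j⟩ := g
    obtain ⟨R, hR_adj, hR_swap, hR_count, hR_prod⟩ :=
      ih fun g hg => hC g (List.mem_cons_of_mem _ hg)
    have hij : LG.Adj i j := hC _ List.mem_cons_self
    obtain ⟨m, him, hmj⟩ := hmed i j hij
    refine ⟨(true, swapMat, i, m) :: (false, U, m, j) :: (true, swapMat, i, m) :: R,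
      ?_, ?_, ?_, ?_⟩
    · simpa [him, hmj] using hR_adj
    · simpa using hR_swap
    · simp only [List.countP_cons_of_pos, List.countP_cons_of_neg, Bool.false_eq_true,
        not_false_eq_true, hR_count, List.length_cons]
      ring
    · simp only [List.map_cons, List.prod_cons, hR_prod, ← mul_assoc,
        gateOn_swapMat_conj U him.ne hmj.ne hij.ne]
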